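/- Let Y be a Banach space, Z ⊆ Y a closed subspace, C ≥ 1, and suppose W ⊆ L_∞([0,1], Z) (with Lebesgue measure) is a finite-dimensional subspace such that ‖w‖_{L_∞} ≤ C ‖w‖_{L_1} for all w ∈ W. Let W₀ be the subspace of functions in L_∞([0,1], Z) that are a.e. constant on [0,1/2) and a.e. constant on [1/2,1], and suppose W = W₀ ∩ (span of functions valued in Z). If Y has the property that for some function f : [1,∞) → [1,∞), every such W embeds into Y with distortion at most f(C), then Z ⊕_∞ Z embeds into Y with distortion at most 2 f(2). -/

import Mathlib

/-!
Send `(z₁, z₂)` to the step function equal to `z₁` on `[0, 1/2)` and to `z₂` on `[1/2, 1]`.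
Its `L_∞` norm is `max ‖z₁‖ ‖z₂‖`, so this is a linear isometry of `Z ⊕_∞ Z` onto a
finite-dimensional subspace `W ⊆ L_∞([0,1], Z)`; and since each half has measure `1/2`, its
`L_1` norm is at least half of that, i.e. `‖w‖_∞ ≤ 2 ‖w‖_1` on `W`. An embedding of `W` into
`Y` with distortion `f 2` composed with this isometry embeds `Z ⊕_∞ Z` with the same distortion.
-/

open MeasureTheory
open scoped ENNReal

namespace StepFunction

variable {α E : Type*} {s t : Set α} [NormedAddCommGroup E]

noncomputable def stepFun (s t : Set α) (z : E × E) : α → E :=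
  s.indicator (fun _ => z.1) + t.indicator (fun _ => z.2)

lemma stepFun_swap (z : E × E) : stepFun t s z.swap = stepFun s t z :=
  add_comm _ _

lemma stepFun_add (z w : E × E) : stepFun s t (z + w) = stepFun s t z + stepFun s t w := by
  ext x
  by_cases hs : x ∈ s <;> by_cases ht : x ∈ t <;> simp [stepFun, hs, ht, add_add_add_comm]

lemma stepFun_smul [NormedSpace ℝ E] (c : ℝ) (z : E × E) :
    stepFun s t (c • z) = c • stepFun s t z := by
  ext x
  by_cases hs : x ∈ s <;> by_cases ht : x ∈ t <;> simp [stepFun, hs, ht]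

lemma indicator_stepFun (hst : Disjoint s t) (z : E × E) :
    s.indicator (stepFun s t z) = s.indicator (fun _ => z.1) := by
  ext x
  by_cases hx : x ∈ s
  · simp [stepFun, hx, Set.disjoint_left.1 hst hx]
  · simp [hx]

lemma norm_stepFun_le (hst : Disjoint s t) (z : E × E) (x : α) : ‖stepFun s t z x‖ ≤ ‖z‖ := by
  by_cases hs : x ∈ s
  · simpa [stepFun, hs, Set.disjoint_left.1 hst hs] using norm_fst_le z
  by_cases ht : x ∈ t
  · simpa [stepFun, hs, ht] using norm_snd_le z
  · simp [stepFun, hs, ht]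

variable [MeasurableSpace α] {μ : Measure α}

lemma enorm_fst_mul_le_eLpNorm_stepFun (hst : Disjoint s t) (hs : MeasurableSet s)
    (hμs : μ s ≠ 0) {p : ℝ≥0∞} (hp : p ≠ 0) (z : E × E) :
    ‖z.1‖ₑ * μ s ^ (1 / p.toReal) ≤ eLpNorm (stepFun s t z) p μ := by
  rw [← eLpNorm_indicator_const' hs hμs hp, ← indicator_stepFun hst]
  exact eLpNorm_indicator_le _

lemma enorm_snd_mul_le_eLpNorm_stepFun (hst : Disjoint s t) (ht : MeasurableSet t)
    (hμt : μ t ≠ 0) {p : ℝ≥0∞} (hp : p ≠ 0) (z : E × E) :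
    ‖z.2‖ₑ * μ t ^ (1 / p.toReal) ≤ eLpNorm (stepFun s t z) p μ := by
  rw [← stepFun_swap]
  exact enorm_fst_mul_le_eLpNorm_stepFun hst.symm ht hμt hp z.swap

lemma eLpNorm_top_stepFun (hst : Disjoint s t) (hs : MeasurableSet s) (ht : MeasurableSet t)
    (hμs : μ s ≠ 0) (hμt : μ t ≠ 0) (z : E × E) :
    eLpNorm (stepFun s t z) ∞ μ = ‖z‖ₑ := by
  refine le_antisymm ?_ ?_
  · simpa [ofReal_norm] using
      eLpNorm_le_of_ae_bound (μ := μ) (p := ∞) (ae_of_all _ (norm_stepFun_le hst z))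
  · have h1 := enorm_fst_mul_le_eLpNorm_stepFun hst hs hμs (p := ∞) (by simp) z
    have h2 := enorm_snd_mul_le_eLpNorm_stepFun hst ht hμt (p := ∞) (by simp) z
    simp only [ENNReal.toReal_top, div_zero, ENNReal.rpow_zero, mul_one] at h1 h2
    rw [enorm_eq_nnnorm, Prod.nnnorm_def, ENNReal.coe_max]
    exact max_le (by simpa [enorm_eq_nnnorm] using h1) (by simpa [enorm_eq_nnnorm] using h2)

lemma eLpNorm_top_stepFun_le_inv_mul_eLpNorm_one (hst : Disjoint s t) (hs : MeasurableSet s)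
    (ht : MeasurableSet t) (hμs : μ s ≠ 0) (hμt : μ t ≠ 0) (hμs_top : μ s ≠ ∞) (z : E × E) :
    eLpNorm (stepFun s t z) ∞ μ ≤ (min (μ s) (μ t))⁻¹ * eLpNorm (stepFun s t z) 1 μ := by
  rw [← ENNReal.mul_le_iff_le_inv (by simp [hμs, hμt]) (min_le_left _ _ |>.trans_lt
    hμs_top.lt_top).ne, eLpNorm_top_stepFun hst hs ht hμs hμt, mul_comm, enorm_eq_nnnorm,
    Prod.nnnorm_def, ENNReal.coe_max]
  have h1 := enorm_fst_mul_le_eLpNorm_stepFun hst hs hμs (p := 1) one_ne_zero z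
  have h2 := enorm_snd_mul_le_eLpNorm_stepFun hst ht hμt (p := 1) one_ne_zero z
  simp only [ENNReal.toReal_one, div_one, ENNReal.rpow_one, enorm_eq_nnnorm] at h1 h2
  rcases max_cases (‖z.1‖₊ : ℝ≥0∞) ‖z.2‖₊ with ⟨h, _⟩ | ⟨h, _⟩ <;> rw [h]
  · exact le_trans (by gcongr; exact min_le_left _ _) h1
  · exact le_trans (by gcongr; exact min_le_right _ _) h2

lemma memLp_top_stepFun (hs : MeasurableSet s) (ht : MeasurableSet t) (z : E × E) :
    MemLp (stepFun s t z) ∞ μ :=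
  ((memLp_top_const z.1).indicator hs).add ((memLp_top_const z.2).indicator ht)

variable [NormedSpace ℝ E]

noncomputable def stepLp (hs : MeasurableSet s) (ht : MeasurableSet t) :
    (E × E) →ₗ[ℝ] Lp E ∞ μ where
  toFun z := (memLp_top_stepFun hs ht z).toLp _
  map_add' z w :=
    (MemLp.toLp_congr _ _ (.of_eq (stepFun_add z w))).trans (MemLp.toLp_add _ _)
  map_smul' c z :=
    (MemLp.toLp_congr _ _ (.of_eq (stepFun_smul c z))).trans (MemLp.toLp_const_smul _ _)

lemma coeFn_stepLp (hs : MeasurableSet s) (ht : MeasurableSet t) (z : E × E) :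
    stepLp (μ := μ) hs ht z =ᵐ[μ] stepFun s t z :=
  (memLp_top_stepFun hs ht z).coeFn_toLp

lemma norm_stepLp (hst : Disjoint s t) (hs : MeasurableSet s) (ht : MeasurableSet t)
    (hμs : μ s ≠ 0) (hμt : μ t ≠ 0) (z : E × E) : ‖stepLp (μ := μ) hs ht z‖ = ‖z‖ := by
  rw [Lp.norm_def, eLpNorm_congr_ae (coeFn_stepLp hs ht z),
    eLpNorm_top_stepFun hst hs ht hμs hμt, toReal_enorm]

end StepFunction

section UnitInterval

open Set StepFunction

lemma disjoint_Ico_Icc_half : Disjoint (Ico (0:ℝ) (1/2)) (Icc (1/2) 1) :=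
  disjoint_left.2 fun _ h1 h2 => h1.2.not_ge h2.1

lemma volume_restrict_Icc_Ico_half :
    volume.restrict (Icc (0:ℝ) 1) (Ico 0 (1/2)) = 2⁻¹ := by
  rw [Measure.restrict_apply measurableSet_Ico,
    inter_eq_left.2 (Ico_subset_Icc_self.trans (Icc_subset_Icc_right (by norm_num))),
    Real.volume_Ico, sub_zero, one_div, ENNReal.ofReal_inv_of_pos two_pos, ENNReal.ofReal_ofNat]

lemma volume_restrict_Icc_Icc_half :
    volume.restrict (Icc (0:ℝ) 1) (Icc (1/2) 1) = 2⁻¹ := by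
  rw [Measure.restrict_apply measurableSet_Icc,
    inter_eq_left.2 (Icc_subset_Icc_left (by norm_num)), Real.volume_Icc,
    show (1:ℝ) - 1/2 = 2⁻¹ by norm_num, ENNReal.ofReal_inv_of_pos two_pos, ENNReal.ofReal_ofNat]

variable (E : Type*) [NormedAddCommGroup E] [NormedSpace ℝ E]

noncomputable def halvesStepLp : (E × E) →ₗ[ℝ] Lp E ∞ (volume.restrict (Icc (0:ℝ) 1)) :=
  stepLp (measurableSet_Ico (a := 0) (b := 1/2)) (measurableSet_Icc (a := 1/2) (b := 1))

variable {E}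

lemma norm_halvesStepLp (z : E × E) : ‖halvesStepLp E z‖ = ‖z‖ :=
  norm_stepLp disjoint_Ico_Icc_half _ _ (by rw [volume_restrict_Icc_Ico_half]; simp)
    (by rw [volume_restrict_Icc_Icc_half]; simp) z

lemma eLpNorm_top_halvesStepLp_le (z : E × E) :
    eLpNorm (halvesStepLp E z) ∞ (volume.restrict (Icc (0:ℝ) 1)) ≤
      ENNReal.ofReal 2 * eLpNorm (halvesStepLp E z) 1 (volume.restrict (Icc (0:ℝ) 1)) := by
  have hμs := volume_restrict_Icc_Ico_half
  have hμt := volume_restrict_Icc_Icc_half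
  have hz : halvesStepLp E z =ᵐ[volume.restrict (Icc (0:ℝ) 1)]
      stepFun (Ico 0 (1/2)) (Icc (1/2) 1) z :=
    coeFn_stepLp _ _ z
  rw [eLpNorm_congr_ae hz, eLpNorm_congr_ae hz]
  refine (eLpNorm_top_stepFun_le_inv_mul_eLpNorm_one disjoint_Ico_Icc_half measurableSet_Ico
    measurableSet_Icc (by rw [hμs]; simp) (by rw [hμt]; simp) (by rw [hμs]; simp) z).trans_eq ?_
  rw [hμs, hμt, min_self, inv_inv, ENNReal.ofReal_ofNat]

end UnitInterval

theorem stmt_10_general (Y : Type*) [NormedAddCommGroup Y] [NormedSpace ℝ Y]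
    (Z : Submodule ℝ Y) [FiniteDimensional ℝ Z]
    (f : ℝ → ℝ)
    (hY : ∀ C : ℝ, 1 ≤ C →
      ∀ W : Submodule ℝ (Lp Z ∞ (volume.restrict (Set.Icc (0:ℝ) 1))),
        FiniteDimensional ℝ W →
        (∀ w ∈ W, eLpNorm (w : ℝ → Z) ∞ (volume.restrict (Set.Icc (0:ℝ) 1)) ≤
          ENNReal.ofReal C * eLpNorm (w : ℝ → Z) 1 (volume.restrict (Set.Icc (0:ℝ) 1))) →
        ∃ (T : W →ₗ[ℝ] Y) (r : ℝ), 0 < r ∧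
          ∀ w : W, r * ‖w‖ ≤ ‖T w‖ ∧ ‖T w‖ ≤ r * f C * ‖w‖) :
    ∃ (T : (Z × Z) →ₗ[ℝ] Y) (r : ℝ), 0 < r ∧
      ∀ z : Z × Z, r * ‖z‖ ≤ ‖T z‖ ∧ ‖T z‖ ≤ r * (2 * f 2) * ‖z‖ := by
  obtain ⟨T, r, hr, hT⟩ := hY 2 one_le_two _
    (LinearMap.finiteDimensional_range (halvesStepLp Z))
    (by rintro _ ⟨z, rfl⟩; exact eLpNorm_top_halvesStepLp_le z)
  refine ⟨T ∘ₗ (halvesStepLp Z).rangeRestrict, r, hr, fun z => ?_⟩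
  obtain ⟨hlower, hupper⟩ := hT ((halvesStepLp Z).rangeRestrict z)
  have hnorm : ‖(halvesStepLp Z).rangeRestrict z‖ = ‖z‖ := norm_halvesStepLp z
  rw [hnorm] at hlower hupper
  refine ⟨hlower, ?_⟩
  rw [LinearMap.comp_apply]
  -- `r * f 2 * ‖z‖ ≥ ‖T _‖ ≥ 0`, so doubling it only increases it.
  linarith [norm_nonneg (T ((halvesStepLp Z).rangeRestrict z))]

/-- Proposition 2.2 (contrapositive form): if every finite-dimensional subspace
`W ⊆ L_∞([0,1], Z)` satisfying `‖w‖_∞ ≤ C ‖w‖_1` embeds into `Y` with distortion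
at most `f C` — in particular the subspace `W₀` of functions a.e. constant on the two
halves of `[0,1]`, which satisfies this with `C = 2` — then `Z ⊕_∞ Z` (i.e. `Z × Z`
with the max norm) embeds into `Y` with distortion at most `2 f 2`. -/
theorem stmt_10 (Y : Type*) [NormedAddCommGroup Y] [NormedSpace ℝ Y] [CompleteSpace Y]
    (Z : Submodule ℝ Y) (hZ : IsClosed (Z : Set Y)) [FiniteDimensional ℝ Z]
    (f : ℝ → ℝ) (hf : ∀ t, 1 ≤ f t)
    (hY : ∀ C : ℝ, 1 ≤ C →
      ∀ W : Submodule ℝ (Lp Z ∞ (volume.restrict (Set.Icc (0:ℝ) 1))),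
        FiniteDimensional ℝ W →
        (∀ w ∈ W, eLpNorm (w : ℝ → Z) ∞ (volume.restrict (Set.Icc (0:ℝ) 1)) ≤
          ENNReal.ofReal C * eLpNorm (w : ℝ → Z) 1 (volume.restrict (Set.Icc (0:ℝ) 1))) →
        ∃ (T : W →ₗ[ℝ] Y) (r : ℝ), 0 < r ∧
          ∀ w : W, r * ‖w‖ ≤ ‖T w‖ ∧ ‖T w‖ ≤ r * f C * ‖w‖) :
    ∃ (T : (Z × Z) →ₗ[ℝ] Y) (r : ℝ), 0 < r ∧
      ∀ z : Z × Z, r * ‖z‖ ≤ ‖T z‖ ∧ ‖T z‖ ≤ r * (2 * f 2) * ‖z‖ :=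
  stmt_10_general Y Z f hY
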